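/- Let 0 < φ, γ < 1 with φ + γ < 1 and let p_{xy} = φ_y(1 + κ(1 - x/γ)(1 - y/φ)) for x,y ∈ {0,1}, where φ_1 = φ, φ_0 = 1-φ. Then p_{xy} ≥ 0 for all x,y ∈ {0,1} if and only if -φγ/((1-φ)(1-γ)) ≤ κ ≤ α/(1-α), where α = min(φ,γ). -/

import Mathlib

/-! The four cell weights are, up to positive factors, the affine expressions `1 + κ`,
`φ - κ (1 - φ)`, `γ - κ (1 - γ)` and `φ γ + κ (1 - φ) (1 - γ)` in `κ`. The two middle ones give
`κ ≤ φ / (1 - φ)` and `κ ≤ γ / (1 - γ)`, i.e. `κ ≤ α / (1 - α)` since `t ↦ t / (1 - t)` is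
increasing on `t < 1`. The last gives the lower bound, which implies `κ ≥ -1` because
`(1 - φ) (1 - γ) - φ γ = 1 - φ - γ > 0`. -/

lemma one_add_mul_one_sub_one_div_nonneg_iff {t : ℝ} (ht : 0 < t) (c : ℝ) :
    0 ≤ 1 + c * (1 - 1 / t) ↔ c * (1 - t) ≤ t := by
  have h : 1 + c * (1 - 1 / t) = (t - c * (1 - t)) / t := by field_simp; ring
  rw [h, le_div_iff₀ ht, zero_mul, sub_nonneg]

lemma one_add_mul_one_sub_one_div_mul_nonneg_iff {s t : ℝ} (hs : 0 < s) (ht : 0 < t) (c : ℝ) :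
    0 ≤ 1 + c * (1 - 1 / s) * (1 - 1 / t) ↔ -(t * s) ≤ c * ((1 - t) * (1 - s)) := by
  have h : c * (1 - 1 / s) * (1 - t) = -(c * ((1 - t) * (1 - s))) / s := by field_simp; ring
  rw [one_add_mul_one_sub_one_div_nonneg_iff ht, h, div_le_iff₀ hs, neg_le]

lemma monotoneOn_div_one_sub : MonotoneOn (fun t : ℝ => t / (1 - t)) (Set.Iio 1) := by
  intro a ha b hb hab
  have ha' : 0 < 1 - a := sub_pos.2 ha
  have hb' : 0 < 1 - b := sub_pos.2 hb
  simp only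
  rw [div_le_div_iff₀ ha' hb']
  nlinarith

lemma le_min_div_one_sub_min_iff {a b : ℝ} (ha : a < 1) (hb : b < 1) (c : ℝ) :
    c ≤ min a b / (1 - min a b) ↔ c * (1 - a) ≤ a ∧ c * (1 - b) ≤ b := by
  rw [monotoneOn_div_one_sub.map_min ha hb, le_min_iff,
    le_div_iff₀ (sub_pos.2 ha), le_div_iff₀ (sub_pos.2 hb)]

lemma neg_one_le_of_neg_le_mul {a b c : ℝ} (hb : 0 < b) (hab : a ≤ b) (h : -a ≤ c * b) :
    -1 ≤ c :=
  le_of_mul_le_mul_right (by linarith) hb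

theorem stmt_1 (φ γ κ : ℝ) (hφ : 0 < φ) (hφ1 : φ < 1) (hγ : 0 < γ) (hγ1 : γ < 1)
    (hsum : φ + γ < 1) :
    (∀ x ∈ ({0, 1} : Set ℝ), ∀ y ∈ ({0, 1} : Set ℝ),
      0 ≤ (if y = 1 then φ else 1 - φ) * (1 + κ * (1 - x / γ) * (1 - y / φ))) ↔
      (-(φ * γ) / ((1 - φ) * (1 - γ)) ≤ κ ∧ κ ≤ min φ γ / (1 - min φ γ)) := by
  have hφ' : 0 < 1 - φ := sub_pos.2 hφ1
  have hD : 0 < (1 - φ) * (1 - γ) := mul_pos hφ' (sub_pos.2 hγ1)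
  have hφγ : φ * γ ≤ (1 - φ) * (1 - γ) := by nlinarith
  simp only [Set.forall_mem_insert, Set.mem_singleton_iff, forall_eq, zero_ne_one, if_false,
    if_true, zero_div, sub_zero, mul_one, mul_nonneg_iff_of_pos_left hφ',
    mul_nonneg_iff_of_pos_left hφ]
  rw [← neg_le_iff_add_nonneg', one_add_mul_one_sub_one_div_nonneg_iff hφ,
    one_add_mul_one_sub_one_div_nonneg_iff hγ, one_add_mul_one_sub_one_div_mul_nonneg_iff hγ hφ,
    div_le_iff₀ hD, le_min_div_one_sub_min_iff hφ1 hγ1]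
  constructor
  · rintro ⟨⟨-, hκφ⟩, hκγ, hlower⟩
    exact ⟨hlower, hκφ, hκγ⟩
  · rintro ⟨hlower, hκφ, hκγ⟩
    exact ⟨⟨neg_one_le_of_neg_le_mul hD hφγ hlower, hκφ⟩, hκγ, hlower⟩
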